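/- arXiv:2310.10396 — 7 statements merged into one kernel-verified Lean document; each statement's English description precedes it below -/
import Mathlib

section
/- In the two-cell affine OCV-R parallel system, the SOC imbalance Δz(t) = z2(t) − z1(t) satisfies the scalar linear ODE Δz'(t) = −(1/τ)·Δz(t) + (κ/τ)·I, where 1/τ = (α/R_tot)·(1/Q1 + 1/Q2) and κ/τ = (1/R_tot)·(R2/Q1 − R1/Q2); equivalently, τ = (R_tot/α)·(Q1·Q2/Q_tot) and κ = (R2·Q2 − R1·Q1)/(α·Q_tot). -/
/-!
Eliminating the branch currents with Kirchhoff's laws gives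
`I₁ = (U₁ - U₂ + I R₂) / R_tot` and `I₂ = (U₂ - U₁ + I R₁) / R_tot`; for affine OCVs
`U₁ - U₂ = -α Δz`, so `Δz' = I₁ / Q₁ - I₂ / Q₂` is affine in `Δz` and `I`, with the stated
coefficients.
-/

section ParallelCells

variable {R1 R2 U1 U2 I1 I2 I : ℝ}

theorem branch_current_fst_eq (hR : R1 + R2 ≠ 0) (hvolt : U1 - I1 * R1 = U2 - I2 * R2)
    (hcurr : I1 + I2 = I) : I1 = (U1 - U2 + I * R2) / (R1 + R2) := by
  rw [eq_div_iff hR]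
  linear_combination -hvolt + R2 * hcurr

theorem branch_current_snd_eq (hR : R1 + R2 ≠ 0) (hvolt : U1 - I1 * R1 = U2 - I2 * R2)
    (hcurr : I1 + I2 = I) : I2 = (U2 - U1 + I * R1) / (R1 + R2) := by
  rw [eq_div_iff hR]
  linear_combination hvolt + R1 * hcurr

end ParallelCells

theorem hasDerivAt_soc_imbalance {Q1 Q2 R1 R2 α β I t : ℝ} {z1 z2 I1 I2 : ℝ → ℝ}
    (hR : R1 + R2 ≠ 0)
    (hvolt : (α * z1 t + β) - I1 t * R1 = (α * z2 t + β) - I2 t * R2)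
    (hcurr : I1 t + I2 t = I)
    (hz1 : HasDerivAt z1 (-(I1 t) / Q1) t) (hz2 : HasDerivAt z2 (-(I2 t) / Q2) t) :
    HasDerivAt (fun s => z2 s - z1 s)
      (-(α / (R1 + R2) * (1 / Q1 + 1 / Q2)) * (z2 t - z1 t) +
        1 / (R1 + R2) * (R2 / Q1 - R1 / Q2) * I) t := by
  refine (hz2.sub hz1).congr_deriv ?_
  rw [branch_current_fst_eq hR hvolt hcurr, branch_current_snd_eq hR hvolt hcurr]
  ring

theorem one_div_time_constant {Q1 Q2 R α : ℝ} (hQ1 : Q1 ≠ 0) (hQ2 : Q2 ≠ 0) :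
    1 / ((R / α) * (Q1 * Q2 / (Q1 + Q2))) = (α / R) * (1 / Q1 + 1 / Q2) := by
  field_simp
  ring

theorem imbalance_gain_div_time_constant {Q1 Q2 R1 R2 α : ℝ} (hQ1 : Q1 ≠ 0) (hQ2 : Q2 ≠ 0)
    (hQ : Q1 + Q2 ≠ 0) (hα : α ≠ 0) :
    (R2 * Q2 - R1 * Q1) / (α * (Q1 + Q2)) / (((R1 + R2) / α) * (Q1 * Q2 / (Q1 + Q2))) =
      (1 / (R1 + R2)) * (R2 / Q1 - R1 / Q2) := by
  field_simp

theorem stmt1_general (Q1 Q2 R1 R2 α β I : ℝ)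
    (hQ1 : 0 < Q1) (hQ2 : 0 < Q2) (hR1 : 0 < R1) (hR2 : 0 < R2)
    (hα : 0 < α)
    (z1 z2 I1 I2 : ℝ → ℝ)
    (hvolt : ∀ t, (α * z1 t + β) - I1 t * R1 = (α * z2 t + β) - I2 t * R2)
    (hcurr : ∀ t, I1 t + I2 t = I)
    (hz1 : ∀ t, HasDerivAt z1 (-(I1 t) / Q1) t)
    (hz2 : ∀ t, HasDerivAt z2 (-(I2 t) / Q2) t)
    (τ κ : ℝ)
    (hτ : τ = ((R1 + R2) / α) * (Q1 * Q2 / (Q1 + Q2)))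
    (hκ : κ = (R2 * Q2 - R1 * Q1) / (α * (Q1 + Q2))) :
    1 / τ = (α / (R1 + R2)) * (1 / Q1 + 1 / Q2) ∧
    κ / τ = (1 / (R1 + R2)) * (R2 / Q1 - R1 / Q2) ∧
    ∀ t, HasDerivAt (fun s => z2 s - z1 s)
      (-(1 / τ) * (z2 t - z1 t) + (κ / τ) * I) t := by
  have hrate : 1 / τ = (α / (R1 + R2)) * (1 / Q1 + 1 / Q2) := by
    rw [hτ]
    exact one_div_time_constant hQ1.ne' hQ2.ne'
  have hgain : κ / τ = (1 / (R1 + R2)) * (R2 / Q1 - R1 / Q2) := by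
    rw [hτ, hκ]
    exact imbalance_gain_div_time_constant hQ1.ne' hQ2.ne' (by positivity) hα.ne'
  refine ⟨hrate, hgain, fun t => ?_⟩
  rw [hrate, hgain]
  exact hasDerivAt_soc_imbalance (by positivity) (hvolt t) (hcurr t) (hz1 t) (hz2 t)

/-- In the two-cell affine OCV-R parallel system, the SOC imbalance `Δz = z2 - z1`
satisfies `Δz' = -(1/τ)·Δz + (κ/τ)·I`, with
`1/τ = (α/R_tot)·(1/Q1 + 1/Q2)` and `κ/τ = (1/R_tot)·(R2/Q1 - R1/Q2)`. -/
theorem stmt1 (Q1 Q2 R1 R2 α β I : ℝ)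
    (hQ1 : 0 < Q1) (hQ2 : 0 < Q2) (hR1 : 0 < R1) (hR2 : 0 < R2)
    (hα : 0 < α) (hβ : 0 < β)
    (z1 z2 I1 I2 : ℝ → ℝ)
    (hvolt : ∀ t, (α * z1 t + β) - I1 t * R1 = (α * z2 t + β) - I2 t * R2)
    (hcurr : ∀ t, I1 t + I2 t = I)
    (hz1 : ∀ t, HasDerivAt z1 (-(I1 t) / Q1) t)
    (hz2 : ∀ t, HasDerivAt z2 (-(I2 t) / Q2) t)
    (τ κ : ℝ)
    (hτ : τ = ((R1 + R2) / α) * (Q1 * Q2 / (Q1 + Q2)))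
    (hκ : κ = (R2 * Q2 - R1 * Q1) / (α * (Q1 + Q2))) :
    1 / τ = (α / (R1 + R2)) * (1 / Q1 + 1 / Q2) ∧
    κ / τ = (1 / (R1 + R2)) * (R2 / Q1 - R1 / Q2) ∧
    ∀ t, HasDerivAt (fun s => z2 s - z1 s)
      (-(1 / τ) * (z2 t - z1 t) + (κ / τ) * I) t :=
  stmt1_general Q1 Q2 R1 R2 α β I hQ1 hQ2 hR1 hR2 hα z1 z2 I1 I2 hvolt hcurr hz1 hz2 τ κ hτ hκ
end

section
/- In the two-cell affine OCV-R parallel system with constant applied current I, initial SOCs z_{1,0}, z_{2,0}, and Δz(t) = Δz_0·e^{−t/τ} + κ·(1 − e^{−t/τ})·I where Δz_0 = z_{2,0} − z_{1,0}, the solution of the coupled SOC dynamics is z_1(t) = (Q1·z_{1,0} + Q2·z_{2,0} − I·t)/Q_tot − (Q2/Q_tot)·Δz(t) and z_2(t) = (Q1·z_{1,0} + Q2·z_{2,0} − I·t)/Q_tot + (Q1/Q_tot)·Δz(t); i.e., these formulas give the unique solution of the system z_1' = (α·(z_2 − z_1) − R2·I)/(Q1·R_tot), z_2' = (−α·(z_2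 − z_1) − R1·I)/(Q2·R_tot) with the given initial conditions. -/
/-!
The charge balance `Q1 z1 + Q2 z2 + I t` has zero derivative, so it is constant, and the gap
`z2 - z1` satisfies the linear relaxation equation `w' = (κ I - w) / τ`, so it is `Δz`.
Solving these two linear relations for `z1` and `z2` gives the formulas.
-/

open Real

theorem eq_of_forall_hasDerivAt_zero {f : ℝ → ℝ} (hf : ∀ t, HasDerivAt f 0 t) (x y : ℝ) :
    f x = f y :=
  is_const_of_deriv_eq_zero (fun t => (hf t).differentiableAt) (fun t => (hf t).deriv) x y

theorem eq_of_forall_hasDerivAt_relaxation {f : ℝ → ℝ} {c τ : ℝ} (hτ : τ ≠ 0)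
    (hf : ∀ t, HasDerivAt f ((c - f t) / τ) t) (t : ℝ) :
    f t = f 0 * exp (-t / τ) + c * (1 - exp (-t / τ)) := by
  have hg : ∀ s, HasDerivAt (fun s => (f s - c) * exp (s / τ)) 0 s := by
    intro s
    have he : HasDerivAt (fun s => exp (s / τ)) (exp (s / τ) * (1 / τ)) s :=
      ((hasDerivAt_id' s).div_const τ).exp
    refine (((hf s).sub_const c).mul he).congr_deriv ?_
    field_simp
    ring
  have hconst := eq_of_forall_hasDerivAt_zero hg t 0
  simp only [zero_div, exp_zero, mul_one] at hconst
  have hexp : exp (-t / τ) * exp (t / τ) = 1 := by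
    rw [← exp_add, neg_div, neg_add_cancel, exp_zero]
  linear_combination exp (-t / τ) * hconst - (f t - c) * hexp

theorem stmt3_general (Q1 Q2 R1 R2 α I z10 z20 : ℝ)
    (hQ1 : 0 < Q1) (hQ2 : 0 < Q2) (hR1 : 0 < R1) (hR2 : 0 < R2)
    (hα : 0 < α)
    (τ κ : ℝ)
    (hτ : τ = ((R1 + R2) / α) * (Q1 * Q2 / (Q1 + Q2)))
    (hκ : κ = (R2 * Q2 - R1 * Q1) / (α * (Q1 + Q2)))
    (Δz : ℝ → ℝ)
    (hΔz : ∀ t, Δz t = (z20 - z10) * Real.exp (-t / τ) + κ * (1 - Real.exp (-t / τ)) * I)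
    (z1 z2 : ℝ → ℝ)
    (hz1d : ∀ t, HasDerivAt z1 ((α * (z2 t - z1 t) - R2 * I) / (Q1 * (R1 + R2))) t)
    (hz2d : ∀ t, HasDerivAt z2 ((-(α * (z2 t - z1 t)) - R1 * I) / (Q2 * (R1 + R2))) t)
    (hz10 : z1 0 = z10) (hz20 : z2 0 = z20) :
    ∀ t, 0 ≤ t →
      z1 t = (Q1 * z10 + Q2 * z20 - I * t) / (Q1 + Q2) - (Q2 / (Q1 + Q2)) * Δz t ∧
      z2 t = (Q1 * z10 + Q2 * z20 - I * t) / (Q1 + Q2) + (Q1 / (Q1 + Q2)) * Δz t := by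
  have hRt : R1 + R2 ≠ 0 := by positivity
  have hτ0 : τ ≠ 0 := by rw [hτ]; positivity
  have hcharge : ∀ t, HasDerivAt (fun t => Q1 * z1 t + Q2 * z2 t + I * t) 0 t := fun t =>
    ((((hz1d t).const_mul Q1).add ((hz2d t).const_mul Q2)).add
      ((hasDerivAt_id t).const_mul I)).congr_deriv (by field_simp; ring)
  have hgap : ∀ t, HasDerivAt (fun t => z2 t - z1 t) ((κ * I - (z2 t - z1 t)) / τ) t :=
    fun t => ((hz2d t).sub (hz1d t)).congr_deriv (by rw [hτ, hκ]; field_simp; ring)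
  intro t _
  have hsum := eq_of_forall_hasDerivAt_zero hcharge t 0
  have hdiff : z2 t - z1 t = Δz t := by
    rw [eq_of_forall_hasDerivAt_relaxation hτ0 hgap t, hΔz, hz10, hz20]
    ring
  simp only [hz10, hz20, mul_zero, add_zero] at hsum
  constructor
  · field_simp
    linear_combination hsum - Q2 * hdiff
  · field_simp
    linear_combination hsum + Q1 * hdiff

/-- Unique solution of the coupled SOC dynamics of the two-cell affine OCV-R parallel
system under constant applied current `I`. -/
theorem stmt3 (Q1 Q2 R1 R2 α β I z10 z20 : ℝ)
    (hQ1 : 0 < Q1) (hQ2 : 0 < Q2) (hR1 : 0 < R1) (hR2 : 0 < R2)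
    (hα : 0 < α) (hβ : 0 < β)
    (τ κ : ℝ)
    (hτ : τ = ((R1 + R2) / α) * (Q1 * Q2 / (Q1 + Q2)))
    (hκ : κ = (R2 * Q2 - R1 * Q1) / (α * (Q1 + Q2)))
    (Δz : ℝ → ℝ)
    (hΔz : ∀ t, Δz t = (z20 - z10) * Real.exp (-t / τ) + κ * (1 - Real.exp (-t / τ)) * I)
    (z1 z2 : ℝ → ℝ)
    (hz1d : ∀ t, HasDerivAt z1 ((α * (z2 t - z1 t) - R2 * I) / (Q1 * (R1 + R2))) t)
    (hz2d : ∀ t, HasDerivAt z2 ((-(α * (z2 t - z1 t)) - R1 * I) / (Q2 * (R1 + R2))) t)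
    (hz10 : z1 0 = z10) (hz20 : z2 0 = z20) :
    ∀ t, 0 ≤ t →
      z1 t = (Q1 * z10 + Q2 * z20 - I * t) / (Q1 + Q2) - (Q2 / (Q1 + Q2)) * Δz t ∧
      z2 t = (Q1 * z10 + Q2 * z20 - I * t) / (Q1 + Q2) + (Q1 / (Q1 + Q2)) * Δz t :=
  stmt3_general Q1 Q2 R1 R2 α I z10 z20 hQ1 hQ2 hR1 hR2 hα τ κ hτ hκ Δz hΔz z1 z2 hz1d hz2d hz10
    hz20
end

section
/- In the two-cell affine OCV-R parallel system with constant applied current I, the branch currents are given explicitly by I_1(t) = −(α/R_tot)·[Δz_0·e^{−t/τ} + κ·(1 − e^{−t/τ})·I] + (R2/R_tot)·I and I_2(t) = +(α/R_tot)·[Δz_0·e^{−t/τ} + κ·(1 − e^{−t/τ})·I] + (R1/R_tot)·I, and the current imbalance is ΔI(t) = I_2(t) − I_1(t) = (2α/R_tot)·Δz(t) − (ΔR/R_tot)·I, where Δz(t) = Δz_0·e^{−t/τ} + κ·(1 − e^{−t/τ})·I. -/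
/-! The SOC gap `Δz = z₂ - z₁` determines both branch currents algebraically, through voltage
and current conservation. Substituting them into `Δz' = I₁/Q₁ - I₂/Q₂` gives the linear ODE
`Δz' = -(Δz - κ I)/τ`, whose solution relaxes exponentially from `Δz₀` to `κ I`. -/

open Real

theorem eq_add_mul_exp_of_hasDerivAt_mul_sub {w : ℝ → ℝ} {k c : ℝ}
    (hw : ∀ t, HasDerivAt w (k * (w t - c)) t) (t : ℝ) :
    w t = c + (w 0 - c) * exp (k * t) := by
  set g : ℝ → ℝ := fun s => (w s - c) * exp (-(k * s))
  have hg : ∀ s, HasDerivAt g 0 s := fun s => by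
    have hexp := ((hasDerivAt_id s).const_mul k).neg.exp
    refine (((hw s).sub_const c).mul hexp).congr_deriv ?_
    ring
  have hconst : g t = g 0 :=
    is_const_of_deriv_eq_zero (fun s => (hg s).differentiableAt) (fun s => (hg s).deriv) t 0
  have hgt : (w t - c) * exp (-(k * t)) = w 0 - c := by simpa [g] using hconst
  rw [exp_neg, mul_inv_eq_iff_eq_mul₀ (exp_ne_zero _)] at hgt
  linarith

theorem parallel_branch_currents {α β R1 R2 I z1 z2 I1 I2 : ℝ} (hR : R1 + R2 ≠ 0)
    (hvolt : (α * z1 + β) - I1 * R1 = (α * z2 + β) - I2 * R2) (hcurr : I1 + I2 = I) :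
    I1 = -(α / (R1 + R2)) * (z2 - z1) + (R2 / (R1 + R2)) * I ∧
      I2 = (α / (R1 + R2)) * (z2 - z1) + (R1 / (R1 + R2)) * I := by
  constructor
  · field_simp
    linear_combination -hvolt + R2 * hcurr
  · field_simp
    linear_combination hvolt + R1 * hcurr

theorem soc_gap_rate {Q1 Q2 R1 R2 α I Δz : ℝ} (hQ1 : Q1 ≠ 0) (hQ2 : Q2 ≠ 0)
    (hQ : Q1 + Q2 ≠ 0) (hR : R1 + R2 ≠ 0) (hα : α ≠ 0) :
    -((α / (R1 + R2)) * Δz + (R1 / (R1 + R2)) * I) / Q2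
        - -(-(α / (R1 + R2)) * Δz + (R2 / (R1 + R2)) * I) / Q1 =
      -(1 / (((R1 + R2) / α) * (Q1 * Q2 / (Q1 + Q2)))) *
        (Δz - (R2 * Q2 - R1 * Q1) / (α * (Q1 + Q2)) * I) := by
  field_simp
  ring

theorem stmt4_general (Q1 Q2 R1 R2 α β I : ℝ)
    (hQ1 : 0 < Q1) (hQ2 : 0 < Q2) (hR1 : 0 < R1) (hR2 : 0 < R2)
    (hα : 0 < α)
    (z1 z2 I1 I2 : ℝ → ℝ)
    (hvolt : ∀ t, (α * z1 t + β) - I1 t * R1 = (α * z2 t + β) - I2 t * R2)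
    (hcurr : ∀ t, I1 t + I2 t = I)
    (hz1 : ∀ t, HasDerivAt z1 (-(I1 t) / Q1) t)
    (hz2 : ∀ t, HasDerivAt z2 (-(I2 t) / Q2) t)
    (τ κ Δz0 : ℝ)
    (hτ : τ = ((R1 + R2) / α) * (Q1 * Q2 / (Q1 + Q2)))
    (hκ : κ = (R2 * Q2 - R1 * Q1) / (α * (Q1 + Q2)))
    (hΔz0 : Δz0 = z2 0 - z1 0) :
    ∀ t, 0 ≤ t →
      I1 t = -(α / (R1 + R2)) *
               (Δz0 * Real.exp (-t / τ) + κ * (1 - Real.exp (-t / τ)) * I)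
             + (R2 / (R1 + R2)) * I ∧
      I2 t = (α / (R1 + R2)) *
               (Δz0 * Real.exp (-t / τ) + κ * (1 - Real.exp (-t / τ)) * I)
             + (R1 / (R1 + R2)) * I ∧
      I2 t - I1 t = (2 * α / (R1 + R2)) *
               (Δz0 * Real.exp (-t / τ) + κ * (1 - Real.exp (-t / τ)) * I)
             - ((R2 - R1) / (R1 + R2)) * I := by
  have hR : R1 + R2 ≠ 0 := by positivity
  have hcurrents t := parallel_branch_currents hR (hvolt t) (hcurr t)
  have hgap t : HasDerivAt (fun s => z2 s - z1 s) (-(1 / τ) * ((z2 t - z1 t) - κ * I)) t := by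
    refine ((hz2 t).sub (hz1 t)).congr_deriv ?_
    rw [(hcurrents t).1, (hcurrents t).2, hτ, hκ,
      soc_gap_rate hQ1.ne' hQ2.ne' (by positivity) hR hα.ne']
  intro t _
  have hΔz : z2 t - z1 t = Δz0 * exp (-t / τ) + κ * (1 - exp (-t / τ)) * I := by
    rw [eq_add_mul_exp_of_hasDerivAt_mul_sub hgap t, ← hΔz0, neg_mul, one_div_mul_eq_div,
      neg_div]
    ring
  obtain ⟨hI1, hI2⟩ := hcurrents t
  rw [hI1, hI2, hΔz]
  refine ⟨rfl, rfl, ?_⟩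
  ring

/-- Explicit branch currents and current imbalance of the two-cell affine OCV-R
parallel system under constant applied current `I`. -/
theorem stmt4 (Q1 Q2 R1 R2 α β I : ℝ)
    (hQ1 : 0 < Q1) (hQ2 : 0 < Q2) (hR1 : 0 < R1) (hR2 : 0 < R2)
    (hα : 0 < α) (hβ : 0 < β)
    (z1 z2 I1 I2 : ℝ → ℝ)
    (hvolt : ∀ t, (α * z1 t + β) - I1 t * R1 = (α * z2 t + β) - I2 t * R2)
    (hcurr : ∀ t, I1 t + I2 t = I)
    (hz1 : ∀ t, HasDerivAt z1 (-(I1 t) / Q1) t)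
    (hz2 : ∀ t, HasDerivAt z2 (-(I2 t) / Q2) t)
    (τ κ Δz0 : ℝ)
    (hτ : τ = ((R1 + R2) / α) * (Q1 * Q2 / (Q1 + Q2)))
    (hκ : κ = (R2 * Q2 - R1 * Q1) / (α * (Q1 + Q2)))
    (hΔz0 : Δz0 = z2 0 - z1 0) :
    ∀ t, 0 ≤ t →
      I1 t = -(α / (R1 + R2)) *
               (Δz0 * Real.exp (-t / τ) + κ * (1 - Real.exp (-t / τ)) * I)
             + (R2 / (R1 + R2)) * I ∧
      I2 t = (α / (R1 + R2)) *
               (Δz0 * Real.exp (-t / τ) + κ * (1 - Real.exp (-t / τ)) * I)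
             + (R1 / (R1 + R2)) * I ∧
      I2 t - I1 t = (2 * α / (R1 + R2)) *
               (Δz0 * Real.exp (-t / τ) + κ * (1 - Real.exp (-t / τ)) * I)
             - ((R2 - R1) / (R1 + R2)) * I :=
  stmt4_general Q1 Q2 R1 R2 α β I hQ1 hQ2 hR1 hR2 hα z1 z2 I1 I2 hvolt hcurr hz1 hz2 τ κ Δz0 hτ hκ
    hΔz0
end

section
/- In the two-cell affine OCV-R parallel system with constant applied current I and τ > 0, the branch currents converge as t → ∞ to I_1(t) → (Q1/Q_tot)·I and I_2(t) → (Q2/Q_tot)·I, so the steady-state current imbalance is ΔI_ss = (ΔQ/Q_tot)·I, which depends on the capacity mismatch ΔQ = Q2 − Q1 but not on the resistances. In particular, for I > 0, ΔI_ss < 0 if and only if Q2 < Q1 (the lower-capacity cell carries less steady-state current). -/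
/-- Steady-state branch currents: `I1 → (Q1/Q_tot)·I`, `I2 → (Q2/Q_tot)·I`, so the
steady-state current imbalance is `(ΔQ/Q_tot)·I`, independent of the resistances;
for `I > 0` it is negative iff `Q2 < Q1`. -/
theorem stmt6 (Q1 Q2 R1 R2 α β I Δz0 : ℝ)
    (hQ1 : 0 < Q1) (hQ2 : 0 < Q2) (hR1 : 0 < R1) (hR2 : 0 < R2)
    (hα : 0 < α) (hβ : 0 < β)
    (τ κ : ℝ)
    (hτ : τ = ((R1 + R2) / α) * (Q1 * Q2 / (Q1 + Q2)))
    (hκ : κ = (R2 * Q2 - R1 * Q1) / (α * (Q1 + Q2)))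
    (Δz I1 I2 : ℝ → ℝ)
    (hΔz : ∀ t, Δz t = Δz0 * Real.exp (-t / τ) + κ * (1 - Real.exp (-t / τ)) * I)
    (hI1 : ∀ t, I1 t = -(α / (R1 + R2)) * Δz t + (R2 / (R1 + R2)) * I)
    (hI2 : ∀ t, I2 t = (α / (R1 + R2)) * Δz t + (R1 / (R1 + R2)) * I) :
    Filter.Tendsto I1 Filter.atTop (nhds ((Q1 / (Q1 + Q2)) * I)) ∧
    Filter.Tendsto I2 Filter.atTop (nhds ((Q2 / (Q1 + Q2)) * I)) ∧
    Filter.Tendsto (fun t => I2 t - I1 t) Filter.atTop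
      (nhds (((Q2 - Q1) / (Q1 + Q2)) * I)) ∧
    (0 < I → (((Q2 - Q1) / (Q1 + Q2)) * I < 0 ↔ Q2 < Q1)) := by
  have hQ : 0 < Q1 + Q2 := by linarith
  have hR : 0 < R1 + R2 := by linarith
  have hτ0 : 0 < τ := by
    rw [hτ]; positivity
  have hexp : Filter.Tendsto (fun t : ℝ => Real.exp (-t / τ)) Filter.atTop (nhds 0) := by
    have h1 : Filter.Tendsto (fun t : ℝ => -t / τ) Filter.atTop Filter.atBot := by
      have := (Filter.tendsto_id (x := Filter.atTop (α := ℝ))).atTop_div_const hτ0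
      simpa [neg_div] using Filter.tendsto_neg_atBot_iff.mpr this
    exact Real.tendsto_exp_atBot.comp h1
  have hz : Filter.Tendsto Δz Filter.atTop (nhds (κ * I)) := by
    have : Filter.Tendsto (fun t => Δz0 * Real.exp (-t / τ) + κ * (1 - Real.exp (-t / τ)) * I)
        Filter.atTop (nhds (Δz0 * 0 + κ * (1 - 0) * I)) := by
      exact ((hexp.const_mul Δz0).add (((tendsto_const_nhds.sub hexp).const_mul κ).mul_const I))
    simpa [funext hΔz] using this
  have key1 : -(α / (R1 + R2)) * (κ * I) + (R2 / (R1 + R2)) * I = (Q1 / (Q1 + Q2)) * I := by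
    rw [hκ]; field_simp; ring
  have key2 : (α / (R1 + R2)) * (κ * I) + (R1 / (R1 + R2)) * I = (Q2 / (Q1 + Q2)) * I := by
    rw [hκ]; field_simp; ring
  have t1 : Filter.Tendsto I1 Filter.atTop (nhds ((Q1 / (Q1 + Q2)) * I)) := by
    have := (hz.const_mul (-(α / (R1 + R2)))).add_const ((R2 / (R1 + R2)) * I)
    rw [key1] at this
    simpa [funext hI1] using this
  have t2 : Filter.Tendsto I2 Filter.atTop (nhds ((Q2 / (Q1 + Q2)) * I)) := by
    have := (hz.const_mul (α / (R1 + R2))).add_const ((R1 / (R1 + R2)) * I)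
    rw [key2] at this
    simpa [funext hI2] using this
  refine ⟨t1, t2, ?_, ?_⟩
  · have := t2.sub t1
    have hsub : (Q2 / (Q1 + Q2)) * I - (Q1 / (Q1 + Q2)) * I = ((Q2 - Q1) / (Q1 + Q2)) * I := by
      field_simp
    rwa [hsub] at this
  · intro hI
    constructor
    · intro h
      by_contra hc
      push_neg at hc
      have h2 : 0 ≤ (Q2 - Q1) / (Q1 + Q2) := div_nonneg (by linarith) hQ.le
      have : 0 ≤ ((Q2 - Q1) / (Q1 + Q2)) * I := mul_nonneg h2 hI.le
      linarith
    · intro h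
      have : (Q2 - Q1) / (Q1 + Q2) < 0 := div_neg_of_neg_of_pos (by linarith) hQ
      exact mul_neg_of_neg_of_pos this hI
end

section
/- QR-matching: if Q1·R1 = Q2·R2, then κ = 0, so for every constant applied current I the SOC imbalance satisfies Δz(t) = Δz_0·e^{−t/τ} and Δz(t) → 0 as t → ∞; moreover, under QR-matching the steady-state current imbalance admits the equivalent expressions ΔI_ss = (ΔQ/Q_tot)·I = −(ΔR/R_tot)·I. -/
/-- `QR`-matching: if `Q1·R1 = Q2·R2` then `κ = 0`, the SOC imbalance decays as
`Δz0·e^{-t/τ} → 0` for every constant applied current, and the steady-state current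
imbalance satisfies `(ΔQ/Q_tot)·I = -(ΔR/R_tot)·I`. -/
theorem stmt7 (Q1 Q2 R1 R2 α β : ℝ)
    (hQ1 : 0 < Q1) (hQ2 : 0 < Q2) (hR1 : 0 < R1) (hR2 : 0 < R2)
    (hα : 0 < α) (hβ : 0 < β)
    (τ κ : ℝ)
    (hτ : τ = ((R1 + R2) / α) * (Q1 * Q2 / (Q1 + Q2)))
    (hκ : κ = (R2 * Q2 - R1 * Q1) / (α * (Q1 + Q2)))
    (hQR : Q1 * R1 = Q2 * R2) :
    κ = 0 ∧
    (∀ I Δz0 t : ℝ,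
      Δz0 * Real.exp (-t / τ) + κ * (1 - Real.exp (-t / τ)) * I = Δz0 * Real.exp (-t / τ)) ∧
    (∀ Δz0 : ℝ,
      Filter.Tendsto (fun t => Δz0 * Real.exp (-t / τ)) Filter.atTop (nhds 0)) ∧
    (∀ I : ℝ, ((Q2 - Q1) / (Q1 + Q2)) * I = -((R2 - R1) / (R1 + R2)) * I) := by
  have hκ0 : κ = 0 := by
    rw [hκ]
    have : R2 * Q2 - R1 * Q1 = 0 := by nlinarith
    rw [this]; ring
  have hτpos : 0 < τ := by
    rw [hτ]
    positivity
  refine ⟨hκ0, ?_, ?_, ?_⟩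
  · intro I Δz0 t; rw [hκ0]; ring
  · intro Δz0
    have h : Filter.Tendsto (fun t : ℝ => Real.exp (-t / τ)) Filter.atTop (nhds 0) := by
      apply Real.tendsto_exp_atBot.comp
      apply Filter.Tendsto.atBot_div_const hτpos
      exact Filter.tendsto_neg_atBot_iff.mpr Filter.tendsto_id
    have := h.const_mul Δz0
    simpa using this
  · intro I
    have hQt : Q1 + Q2 ≠ 0 := by positivity
    have hRt : R1 + R2 ≠ 0 := by positivity
    have key : (Q2 - Q1) / (Q1 + Q2) = -((R2 - R1) / (R1 + R2)) := by
      field_simp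
      linear_combination -2 * hQR
    rw [key]
end

section
/- Bound on SOC imbalance for the nonlinear OCV-R system: let Δz be differentiable with Δz'(t) = A·(U(z_2(t)) − U(z_1(t))) + B·I(t), where Δz(t) = z_2(t) − z_1(t), A = −(1/R_tot)·(1/Q1 + 1/Q2) < 0, B = (1/R_tot)·(R1/Q2 − R2/Q1), U is differentiable with U'(z) ≥ k_1 > 0 for all z, and I is a bounded input. If max_t |I(t)| ≤ |A·k_1/B|, then for all t ≥ 0, |Δz(t)| ≤ |Δz(0)|·e^{k_1·A·t} + |B/(A·k_1)|·max_t(|I(t)|)·(1 − e^{k_1·A·t}). -/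
/-- Bound on the SOC imbalance for the nonlinear OCV-R system: if the input satisfies
`max_t |I(t)| ≤ |A·k1/B|`, then
`|Δz(t)| ≤ |Δz(0)|·e^{k1·A·t} + |B/(A·k1)|·max_t|I(t)|·(1 - e^{k1·A·t})` for `t ≥ 0`. -/
theorem stmt15 (Q1 Q2 R1 R2 k1 Imax : ℝ)
    (hQ1 : 0 < Q1) (hQ2 : 0 < Q2) (hR1 : 0 < R1) (hR2 : 0 < R2) (hk1 : 0 < k1)
    (U : ℝ → ℝ) (hU : Differentiable ℝ U) (hU' : ∀ x, k1 ≤ deriv U x)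
    (A B : ℝ)
    (hA : A = -(1 / (R1 + R2)) * (1 / Q1 + 1 / Q2))
    (hB : B = (1 / (R1 + R2)) * (R1 / Q2 - R2 / Q1))
    (z1 z2 I : ℝ → ℝ)
    (hdyn : ∀ t, HasDerivAt (fun s => z2 s - z1 s)
      (A * (U (z2 t) - U (z1 t)) + B * I t) t)
    (hIbound : ∀ t, |I t| ≤ Imax)
    (hcond : Imax ≤ |A * k1 / B|) :
    ∀ t, 0 ≤ t →
      |z2 t - z1 t| ≤ |z2 0 - z1 0| * Real.exp (k1 * A * t)
        + |B / (A * k1)| * Imax * (1 - Real.exp (k1 * A * t)) := by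
  intro t ht
  set w : ℝ → ℝ := fun s => z2 s - z1 s with hwdef
  set d : ℝ → ℝ := fun s => A * (U (z2 s) - U (z1 s)) + B * I s with hddef
  have hA0 : A < 0 := by
    rw [hA]
    have h1 : 0 < 1 / (R1 + R2) := by positivity
    have h2 : 0 < 1 / Q1 + 1 / Q2 := by positivity
    nlinarith
  have hK : k1 * A < 0 := mul_neg_of_pos_of_neg hk1 hA0
  have hImax0 : 0 ≤ Imax := le_trans (abs_nonneg _) (hIbound 0)
  -- monotonicity of U with slope at least k1
  have hmono : ∀ a b : ℝ, a ≤ b → k1 * (b - a) ≤ U b - U a := by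
    intro a b hab
    have hg : ∀ x : ℝ, HasDerivAt (fun y => U y - k1 * y) (deriv U x - k1) x := by
      intro x
      have h := ((hU x).hasDerivAt).sub ((hasDerivAt_id x).const_mul k1)
      rw [mul_one] at h
      exact h
    have hmon : Monotone (fun y => U y - k1 * y) := by
      apply monotone_of_deriv_nonneg
      · exact fun x => (hg x).differentiableAt
      · intro x
        rw [(hg x).deriv]
        linarith [hU' x]
    have := hmon hab
    simp only at this
    linarith
  -- continuity
  have hwc : Continuous w := by
    rw [continuous_iff_continuousAt]
    exact fun x => (hdyn x).continuousAt
  set f : ℝ → ℝ := fun s => |w s| with hfdef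
  set f' : ℝ → ℝ := fun s => if w s = 0 then |d s| else (SignType.sign (w s) : ℝ) * d s
    with hf'def
  have key := le_gronwallBound_of_liminf_deriv_right_le (f := f) (f' := f')
    (δ := |w 0|) (K := k1 * A) (ε := |B| * Imax) (a := 0) (b := t)
    ((hwc.abs).continuousOn)
    ?_ le_rfl ?_ t ⟨ht, le_rfl⟩
  · rw [gronwallBound_of_K_ne_0 (ne_of_lt hK)] at key
    simp only [sub_zero] at key
    have heq : |B| * Imax / (k1 * A) * (Real.exp (k1 * A * t) - 1)
        = |B / (A * k1)| * Imax * (1 - Real.exp (k1 * A * t)) := by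
      rw [abs_div, abs_of_neg (by nlinarith : A * k1 < 0)]
      field_simp
      ring
    calc |z2 t - z1 t| = f t := rfl
      _ ≤ _ := key
      _ = _ := by rw [heq]
  · -- liminf condition
    intro x hx r hr
    by_cases hne : w x = 0
    · -- w x = 0 : use |slope w| → |d x|
      have hd := (hdyn x)
      rw [hasDerivAt_iff_tendsto_slope] at hd
      have habs : Filter.Tendsto (fun z => |slope w x z|) (nhdsWithin x {x}ᶜ) (nhds (|d x|)) :=
        hd.abs
      have hfx : f' x = |d x| := by simp [hf'def, hne]
      rw [hfx] at hr
      have hev : ∀ᶠ z in nhdsWithin x {x}ᶜ, |slope w x z| < r :=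
        habs.eventually_lt_const hr
      have hev2 : ∀ᶠ z in nhdsWithin x (Set.Ioi x), |slope w x z| < r :=
        hev.filter_mono (nhdsWithin_mono x (fun z hz => ne_of_gt hz))
      have hev3 : ∀ᶠ z in nhdsWithin x (Set.Ioi x),
          (z - x)⁻¹ * (f z - f x) < r := by
        filter_upwards [hev2, self_mem_nhdsWithin] with z hz hzx
        have hzx' : (0:ℝ) < z - x := sub_pos.mpr hzx
        have : (z - x)⁻¹ * (f z - f x) = |slope w x z| := by
          simp only [hfdef, hne, abs_zero, sub_zero, slope_def_field]
          rw [abs_div, abs_of_pos hzx', div_eq_inv_mul]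
        rw [this]
        exact hz
      exact hev3.frequently
    · -- w x ≠ 0 : f differentiable at x
      have hd : HasDerivAt f ((SignType.sign (w x) : ℝ) * d x) x :=
        (hasDerivAt_abs hne).comp x (hdyn x)
      rw [hasDerivAt_iff_tendsto_slope] at hd
      have hfx : f' x = (SignType.sign (w x) : ℝ) * d x := by simp [hf'def, hne]
      rw [hfx] at hr
      have hev : ∀ᶠ z in nhdsWithin x {x}ᶜ, slope f x z < r := hd.eventually_lt_const hr
      have hev2 : ∀ᶠ z in nhdsWithin x (Set.Ioi x), slope f x z < r :=
        hev.filter_mono (nhdsWithin_mono x (fun z hz => ne_of_gt hz))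
      have hev3 : ∀ᶠ z in nhdsWithin x (Set.Ioi x),
          (z - x)⁻¹ * (f z - f x) < r := by
        filter_upwards [hev2] with z hz
        rw [slope_def_field, div_eq_inv_mul] at hz
        exact hz
      exact hev3.frequently
  · -- the differential inequality bound
    intro x hx
    have hBI : (SignType.sign (w x) : ℝ) * (B * I x) ≤ |B| * Imax := by
      calc (SignType.sign (w x) : ℝ) * (B * I x) ≤ |(SignType.sign (w x) : ℝ) * (B * I x)| :=
            le_abs_self _
        _ = |(SignType.sign (w x) : ℝ)| * (|B| * |I x|) := by rw [abs_mul, abs_mul]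
        _ ≤ 1 * (|B| * Imax) := by
            apply mul_le_mul _ _ (by positivity) zero_le_one
            · cases h : SignType.sign (w x) <;> simp [h]
            · exact mul_le_mul_of_nonneg_left (hIbound x) (abs_nonneg _)
        _ = |B| * Imax := one_mul _
    by_cases hne : w x = 0
    · have hz : z2 x = z1 x := by
        have : z2 x - z1 x = 0 := hne
        linarith
      have : f' x = |B * I x| := by simp [hf'def, hne, hddef, hz]
      rw [this]
      have : f x = 0 := by simp [hfdef, hne]
      rw [this, mul_zero, zero_add, abs_mul]
      exact mul_le_mul_of_nonneg_left (hIbound x) (abs_nonneg _)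
    · have hfx : f' x = (SignType.sign (w x) : ℝ) * d x := by simp [hf'def, hne]
      rw [hfx]
      have hsplit : (SignType.sign (w x) : ℝ) * d x
          = (SignType.sign (w x) : ℝ) * (A * (U (z2 x) - U (z1 x)))
            + (SignType.sign (w x) : ℝ) * (B * I x) := by
        simp only [hddef]; ring
      rw [hsplit]
      have hmain : (SignType.sign (w x) : ℝ) * (A * (U (z2 x) - U (z1 x)))
          ≤ k1 * A * f x := by
        rcases lt_or_gt_of_ne hne with hneg | hpos
        · -- w x < 0
          rw [sign_neg hneg]
          have hle : z2 x ≤ z1 x := by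
            have : z2 x - z1 x < 0 := hneg
            linarith
          have hU2 := hmono (z2 x) (z1 x) hle
          have hfx2 : f x = -(w x) := abs_of_neg hneg
          rw [hfx2]
          have hw' : w x = z2 x - z1 x := rfl
          norm_num
          nlinarith [hU2, hA0, hneg, hw']
        · -- w x > 0
          rw [sign_pos hpos]
          have hle : z1 x ≤ z2 x := by
            have : 0 < z2 x - z1 x := hpos
            linarith
          have hU2 := hmono (z1 x) (z2 x) hle
          have hfx2 : f x = w x := abs_of_pos hpos
          rw [hfx2]
          have hw' : w x = z2 x - z1 x := rfl
          norm_num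
          nlinarith [hU2, hA0, hpos, hw']
      linarith
end

section
/- Self-limiting incremental capacity loss: for fixed p ∈ (0, 1), r > 0 and Δt > 0, the incremental capacity loss over one cycle, δL(L_0) = (r^{1/p}·Δt + L_0^{1/p})^p − L_0, is a strictly decreasing function of the previously accumulated loss L_0 on (0, ∞); i.e., the more capacity has already been lost, the smaller the additional capacity lost during the next cycle. -/
lemma aux_g_anti (p c : ℝ) (hp0 : 0 < p) (hp1 : p < 1) (hc : 0 < c) :
    StrictAntiOn (fun x : ℝ => (c + x) ^ p - x ^ p) (Set.Ioi (0 : ℝ)) := by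
  apply strictAntiOn_of_deriv_neg (convex_Ioi 0)
  · apply ContinuousOn.sub
    · exact ((continuous_const.add continuous_id).continuousOn).rpow_const
        (fun x hx => Or.inl (by simp [Set.mem_Ioi] at hx; show c + x ≠ 0; positivity))
    · exact continuousOn_id.rpow_const (fun x hx => Or.inl (ne_of_gt hx))
  · intro x hx
    rw [interior_Ioi, Set.mem_Ioi] at hx
    have h1 : HasDerivAt (fun x : ℝ => (c + x) ^ p) (p * (c + x) ^ (p - 1) * 1) x :=
      (Real.hasDerivAt_rpow_const (Or.inl (by positivity))).comp x
        ((hasDerivAt_id x).const_add c)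
    have h2 : HasDerivAt (fun x : ℝ => x ^ p) (p * x ^ (p - 1)) x :=
      Real.hasDerivAt_rpow_const (Or.inl (ne_of_gt hx))
    have h3 : HasDerivAt (fun x : ℝ => (c + x) ^ p - x ^ p) (p * (c + x) ^ (p - 1) * 1 - p * x ^ (p - 1)) x := h1.sub h2
    rw [h3.deriv]
    have : (c + x) ^ (p - 1) < x ^ (p - 1) :=
      Real.rpow_lt_rpow_of_neg hx (by linarith) (by linarith)
    nlinarith

/-- Self-limiting incremental capacity loss: for `p ∈ (0,1)`, `r > 0`, `Δt > 0`, the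
incremental loss `δL(L0) = (r^{1/p}·Δt + L0^{1/p})^p - L0` is strictly decreasing in the
previously accumulated loss `L0` on `(0, ∞)`. -/
theorem stmt19 (p r Δt : ℝ) (hp : p ∈ Set.Ioo (0 : ℝ) 1) (hr : 0 < r) (hΔt : 0 < Δt) :
    StrictAntiOn (fun L0 : ℝ => (r ^ (1 / p) * Δt + L0 ^ (1 / p)) ^ p - L0)
      (Set.Ioi (0 : ℝ)) := by
  obtain ⟨hp0, hp1⟩ := hp
  set c := r ^ (1 / p) * Δt with hcdef
  have hc : 0 < c := by positivity
  intro a ha b hb hab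
  rw [Set.mem_Ioi] at ha hb
  have key := aux_g_anti p c hp0 hp1 hc (Set.mem_Ioi.2 (Real.rpow_pos_of_pos ha (1/p)))
    (Set.mem_Ioi.2 (Real.rpow_pos_of_pos hb (1/p)))
    (Real.rpow_lt_rpow ha.le hab (by positivity))
  have ea : (a ^ (1/p)) ^ p = a := by
    rw [one_div, Real.rpow_inv_rpow ha.le hp0.ne']
  have eb : (b ^ (1/p)) ^ p = b := by
    rw [one_div, Real.rpow_inv_rpow hb.le hp0.ne']
  have key' : (c + b ^ (1/p)) ^ p - (b ^ (1/p)) ^ p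
      < (c + a ^ (1/p)) ^ p - (a ^ (1/p)) ^ p := key
  rw [ea, eb] at key'
  exact key'
end
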